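/- arXiv:1802.03559 — 3 statements merged into one kernel-verified Lean document; each statement's English description precedes it below -/
import Mathlib

section
/- Let $U_0 \in \mathbb{R}$ and for each $j = 1,\dots,n$ let $U_j : \mathbb{R} \to \mathbb{R}$ be continuous and strictly decreasing, and let $f_j, c_j \in \mathbb{R}$. If $z^*$ is the supremum of $F(\delta) = \frac{\sum_{j=1}^n e^{U_j(\delta_j)}(f_j - c_j + \delta_j)}{\sum_{j=1}^n e^{U_j(\delta_j)} + e^{U_0}}$ over $\delta \in \mathbb{R}^n$ and this supremum is attained at some $\delta^*$, then $z^*$ satisfies the equation $e^{U_0} z^* = \max_{\delta \in \mathbb{R}^n} \sum_{j=1}^n e^{U_j(\delta_j)}(f_j - c_j - z^* + \delta_j)$. -/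
open Real

/-- Proposition 1, forward direction: if `z*` is the attained supremum of the
fractional MNL profit objective, then it satisfies the fixed-point equation
`e^{U0} z* = max_δ Σ e^{U_j(δ_j)} (f_j - c_j - z* + δ_j)` (maximum attained). -/
theorem stmt0 (n : ℕ) (U0 : ℝ) (U : Fin n → ℝ → ℝ)
    (hUcont : ∀ j, Continuous (U j)) (hUanti : ∀ j, StrictAnti (U j))
    (f c : Fin n → ℝ) (zstar : ℝ) (δstar : Fin n → ℝ)
    (F : (Fin n → ℝ) → ℝ)
    (hF : ∀ δ, F δ = (∑ j, exp (U j (δ j)) * (f j - c j + δ j)) /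
      ((∑ j, exp (U j (δ j))) + exp U0))
    (hub : ∀ δ, F δ ≤ zstar) (hatt : F δstar = zstar) :
    IsGreatest (Set.range fun δ : Fin n → ℝ =>
      ∑ j, exp (U j (δ j)) * (f j - c j - zstar + δ j)) (exp U0 * zstar) := by
  have hden : ∀ δ : Fin n → ℝ, 0 < (∑ j, exp (U j (δ j))) + exp U0 := by
    intro δ
    have h1 : (0:ℝ) ≤ ∑ j, exp (U j (δ j)) :=
      Finset.sum_nonneg fun j _ => (exp_pos _).le
    linarith [exp_pos U0]
  have key : ∀ δ : Fin n → ℝ,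
      (∑ j, exp (U j (δ j)) * (f j - c j - zstar + δ j))
        = F δ * ((∑ j, exp (U j (δ j))) + exp U0) - zstar * ∑ j, exp (U j (δ j)) := by
    intro δ
    rw [hF δ, div_mul_cancel₀ _ (hden δ).ne']
    rw [Finset.mul_sum, ← Finset.sum_sub_distrib]
    apply Finset.sum_congr rfl
    intro j _
    ring
  constructor
  · refine ⟨δstar, ?_⟩
    show ∑ j, exp (U j (δstar j)) * (f j - c j - zstar + δstar j) = exp U0 * zstar
    rw [key δstar, hatt]
    ring
  · rintro x ⟨δ, rfl⟩
    show ∑ j, exp (U j (δ j)) * (f j - c j - zstar + δ j) ≤ exp U0 * zstar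
    rw [key δ]
    have h1 : (0:ℝ) ≤ ∑ j, exp (U j (δ j)) :=
      Finset.sum_nonneg fun j _ => (exp_pos _).le
    nlinarith [hub δ, hden δ]
end

section
/- Let $U_0 \in \mathbb{R}$, $f_j, c_j \in \mathbb{R}$, and $U_j : \mathbb{R} \to \mathbb{R}$ for $j = 1,\dots,n$. If $z^*$ satisfies $e^{U_0} z^* = \max_{\delta \in \mathbb{R}^n} \sum_{j=1}^n e^{U_j(\delta_j)}(f_j - c_j - z^* + \delta_j)$ where the maximum is attained, then $z^*$ equals the maximum over $\delta \in \mathbb{R}^n$ of $\frac{\sum_{j=1}^n e^{U_j(\delta_j)}(f_j - c_j + \delta_j)}{\sum_{j=1}^n e^{U_j(\delta_j)} + e^{U_0}}$, and this maximum is attained. -/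
open Real

/-- Proposition 1, converse direction: if `z*` satisfies the attained fixed-point
equation `e^{U0} z* = max_δ Σ e^{U_j(δ_j)} (f_j - c_j - z* + δ_j)`, then `z*` is
the attained maximum of the fractional MNL profit objective. -/
theorem stmt1 (n : ℕ) (U0 : ℝ) (U : Fin n → ℝ → ℝ) (f c : Fin n → ℝ) (zstar : ℝ)
    (hfix : IsGreatest (Set.range fun δ : Fin n → ℝ =>
      ∑ j, exp (U j (δ j)) * (f j - c j - zstar + δ j)) (exp U0 * zstar)) :
    IsGreatest (Set.range fun δ : Fin n → ℝ =>
      (∑ j, exp (U j (δ j)) * (f j - c j + δ j)) /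
        ((∑ j, exp (U j (δ j))) + exp U0)) zstar := by
  obtain ⟨⟨δ0, hδ0⟩, hub⟩ := hfix
  have key : ∀ δ : Fin n → ℝ,
      (∑ j, exp (U j (δ j)) * (f j - c j - zstar + δ j)) =
      (∑ j, exp (U j (δ j)) * (f j - c j + δ j)) - (∑ j, exp (U j (δ j))) * zstar := by
    intro δ
    rw [Finset.sum_mul, ← Finset.sum_sub_distrib]
    exact Finset.sum_congr rfl fun j _ => by ring
  have hSpos : ∀ δ : Fin n → ℝ, (0:ℝ) < (∑ j, exp (U j (δ j))) + exp U0 := by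
    intro δ
    have h1 : (0:ℝ) ≤ ∑ j, exp (U j (δ j)) :=
      Finset.sum_nonneg fun j _ => (exp_pos _).le
    have h2 := exp_pos U0
    linarith
  constructor
  · refine ⟨δ0, ?_⟩
    have h := hδ0
    beta_reduce at h ⊢
    rw [key δ0] at h
    rw [div_eq_iff (hSpos δ0).ne']
    linarith
  · rintro y ⟨δ, rfl⟩
    have h := hub ⟨δ, rfl⟩
    beta_reduce at h ⊢
    rw [key δ] at h
    rw [div_le_iff₀ (hSpos δ)]
    linarith
end

section
/- Let $e_2 > e_1 > 0$, $a \in \mathbb{R}$ (where $a = z - f + c$), and define $\phi : \mathbb{R} \to \mathbb{R}$ by $\phi(\delta) = e^{E(\delta)}(\delta - a)$ with $E(\delta) = -e_1 \min\{0,\delta\} - e_2 \max\{0,\delta\}$. Then $\phi$ attains its maximum over $\mathbb{R}$ at the point $\delta^* = a + 1/e_1$ if $a + 1/e_1 < 0$; at $\delta^* = a + 1/e_2$ if $a + 1/e_2 > 0$; and at $\delta^* = 0$ otherwise. -/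
/-!
On `δ ≤ 0` the function `φ` is `δ ↦ e^{-e₁ δ} (δ - a)`, on `δ ≥ 0` it is `δ ↦ e^{-e₂ δ} (δ - a)`.
For `c > 0` the profile `x ↦ e^{-c x} (x - a)` has derivative `e^{-c x} (1 - c (x - a))`, so it
increases up to `a + 1/c` and decreases after it. Since `a + 1/e₂ < a + 1/e₁`, in each of the
three cases one of the two pieces attains its peak on its own half-line, while the other piece is
monotone towards `0` and so is dominated by the value at `0`, where the pieces agree.
-/

open Real Set

lemma le_of_monotoneOn_Iic_of_antitoneOn_Ici {α β : Type*} [LinearOrder α] [Preorder β]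
    {f : α → β} {m : α} (hmono : MonotoneOn f (Iic m)) (hanti : AntitoneOn f (Ici m)) (x : α) :
    f x ≤ f m := by
  rcases le_total x m with hx | hx
  · exact hmono hx self_mem_Iic hx
  · exact hanti self_mem_Ici hx hx

noncomputable def expProfit (c a x : ℝ) : ℝ := exp (-(c * x)) * (x - a)

namespace expProfit

variable (c a : ℝ)

lemma hasDerivAt (x : ℝ) :
    HasDerivAt (expProfit c a) (exp (-(c * x)) * (1 - c * (x - a))) x := by
  have hexp : HasDerivAt (fun x => exp (-(c * x))) (exp (-(c * x)) * -c) x := by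
    simpa using ((hasDerivAt_id' x).const_mul c).neg.exp
  exact (hexp.mul ((hasDerivAt_id' x).sub_const a)).congr_deriv (by ring)

lemma differentiable : Differentiable ℝ (expProfit c a) :=
  fun x => (hasDerivAt c a x).differentiableAt

lemma monotoneOn (hc : 0 ≤ c) : MonotoneOn (expProfit c a) (Iic (a + 1 / c)) := by
  refine monotoneOn_of_deriv_nonneg (convex_Iic _) (differentiable c a).continuous.continuousOn
    (differentiable c a).differentiableOn fun x hx => ?_
  rw [interior_Iic, mem_Iio] at hx
  have hslope : c * (x - a) ≤ 1 :=
    calc c * (x - a) ≤ c * (1 / c) := mul_le_mul_of_nonneg_left (by linarith) hc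
      _ ≤ 1 := by rw [mul_one_div]; exact div_self_le_one c
  rw [(hasDerivAt c a x).deriv]
  exact mul_nonneg (exp_pos _).le (by linarith)

lemma antitoneOn (hc : 0 < c) : AntitoneOn (expProfit c a) (Ici (a + 1 / c)) := by
  refine antitoneOn_of_deriv_nonpos (convex_Ici _) (differentiable c a).continuous.continuousOn
    (differentiable c a).differentiableOn fun x hx => ?_
  rw [interior_Ici, mem_Ioi] at hx
  have hslope : 1 ≤ c * (x - a) :=
    calc 1 = c * (1 / c) := by field_simp
      _ ≤ c * (x - a) := mul_le_mul_of_nonneg_left (by linarith) hc.le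
  rw [(hasDerivAt c a x).deriv]
  exact mul_nonpos_of_nonneg_of_nonpos (exp_pos _).le (by linarith)

lemma le_peak (hc : 0 < c) (x : ℝ) : expProfit c a x ≤ expProfit c a (a + 1 / c) :=
  le_of_monotoneOn_Iic_of_antitoneOn_Ici (monotoneOn c a hc.le) (antitoneOn c a hc) x

end expProfit

/-- Proposition 2's argmax formula: with asymmetric disutility `E`, the function
`φ(δ) = e^{E(δ)} (δ - a)` attains its maximum at `a + 1/e₁` if `a + 1/e₁ < 0`,
at `a + 1/e₂` if `a + 1/e₂ > 0`, and at `0` otherwise. -/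
theorem stmt7 (e1 e2 a : ℝ) (he1 : 0 < e1) (he : e1 < e2)
    (E : ℝ → ℝ) (hE : ∀ x, E x = -e1 * min 0 x - e2 * max 0 x)
    (φ : ℝ → ℝ) (hφ : ∀ δ, φ δ = exp (E δ) * (δ - a)) :
    (a + 1 / e1 < 0 → ∀ δ, φ δ ≤ φ (a + 1 / e1)) ∧
    (0 < a + 1 / e2 → ∀ δ, φ δ ≤ φ (a + 1 / e2)) ∧
    (¬ a + 1 / e1 < 0 → ¬ 0 < a + 1 / e2 → ∀ δ, φ δ ≤ φ 0) := by
  have he2 : 0 < e2 := he1.trans he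
  have hpeaks : a + 1 / e2 < a + 1 / e1 := by gcongr
  have hφ_nonpos : ∀ x ≤ 0, φ x = expProfit e1 a x := fun x hx => by
    rw [hφ, hE, min_eq_right hx, max_eq_left hx, expProfit]; ring_nf
  have hφ_nonneg : ∀ x, 0 ≤ x → φ x = expProfit e2 a x := fun x hx => by
    rw [hφ, hE, min_eq_left hx, max_eq_right hx, expProfit]; ring_nf
  have hleft : 0 ≤ a + 1 / e1 → ∀ x ≤ 0, φ x ≤ φ 0 := fun hp x hx => by
    rw [hφ_nonpos x hx, hφ_nonpos 0 le_rfl]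
    exact expProfit.monotoneOn e1 a he1.le (hx.trans hp) hp hx
  have hright : a + 1 / e2 ≤ 0 → ∀ x, 0 ≤ x → φ x ≤ φ 0 := fun hq x hx => by
    rw [hφ_nonneg x hx, hφ_nonneg 0 le_rfl]
    exact expProfit.antitoneOn e2 a he2 hq (hq.trans hx) hx
  refine ⟨fun hp δ => ?_, fun hq δ => ?_, fun hp hq δ => ?_⟩
  · have hpeak : ∀ x ≤ 0, φ x ≤ φ (a + 1 / e1) := fun x hx => by
      rw [hφ_nonpos x hx, hφ_nonpos _ hp.le]
      exact expProfit.le_peak e1 a he1 x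
    rcases le_total δ 0 with hδ | hδ
    · exact hpeak δ hδ
    · exact (hright (hpeaks.trans hp).le δ hδ).trans (hpeak 0 le_rfl)
  · have hpeak : ∀ x, 0 ≤ x → φ x ≤ φ (a + 1 / e2) := fun x hx => by
      rw [hφ_nonneg x hx, hφ_nonneg _ hq.le]
      exact expProfit.le_peak e2 a he2 x
    rcases le_total δ 0 with hδ | hδ
    · exact (hleft (hq.trans hpeaks).le δ hδ).trans (hpeak 0 le_rfl)
    · exact hpeak δ hδ
  · rw [not_lt] at hp hq
    rcases le_total δ 0 with hδ | hδ
    · exact hleft hp δ hδ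
    · exact hright hq δ hδ
end
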